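/- Let F be holomorphic on an open neighbourhood of 0 in ℂ with F(0) = 0, F'(0) ≠ 0, |F'(0)| ≠ 1 and F''(0) ≠ 0. Then for every δ > 0 there exist points z₊ and z₋ with 0 < |z₊| < δ, 0 < |z₋| < δ, F(z₊) ≠ 0, F(z₋) ≠ 0, such that K(z₊) > 0 and K(z₋) < 0; that is, every punctured neighbourhood of 0 contains one region of positive and one region of negative Gaussian curvature. -/

import Mathlib

/-- Gaussian curvature of the modular surface `(x, y, |F(x+iy)|)` in Lorentz-Minkowski
3-space, at a point where `F ≠ 0` and `|F'| ≠ 1`: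
`K = -(|F'|⁴ - |2FF'' - F'²|²)/(4|F|²(1-|F'|²)²)`. -/
noncomputable def gaussK (F : ℂ → ℂ) (z : ℂ) : ℝ :=
  -(‖deriv F z‖ ^ 4 -
      ‖2 * F z * deriv (deriv F) z - (deriv F z) ^ 2‖ ^ 2) /
    (4 * ‖F z‖ ^ 2 * (1 - ‖deriv F z‖ ^ 2) ^ 2)

open Complex Filter Topology

lemma hasDerivAt_normSq_comp {h : ℝ → ℂ} {h' : ℂ} {t : ℝ}
    (hh : HasDerivAt h h' t) :
    HasDerivAt (fun s => Complex.normSq (h s))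
      (2 * ((h t).re * h'.re + (h t).im * h'.im)) t := by
  have hre : HasDerivAt (fun s => (h s).re) h'.re t := by
    exact Complex.reCLM.hasFDerivAt.comp_hasDerivAt t hh
  have him : HasDerivAt (fun s => (h s).im) h'.im t := by
    exact Complex.imCLM.hasFDerivAt.comp_hasDerivAt t hh
  have key : (fun s => Complex.normSq (h s))
      = fun s => (h s).re * (h s).re + (h s).im * (h s).im := by
    funext s; exact Complex.normSq_apply _
  rw [key]
  refine ((hre.mul hre).add (him.mul him)).congr_deriv ?_
  ring

lemma gaussK_eq (F : ℂ → ℂ) (z : ℂ) :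
    gaussK F z =
      (Complex.normSq (2 * F z * deriv (deriv F) z - (deriv F z) ^ 2)
        - (Complex.normSq (deriv F z)) ^ 2) /
      (4 * Complex.normSq (F z) * (1 - Complex.normSq (deriv F z)) ^ 2) := by
  unfold gaussK
  rw [show ‖deriv F z‖ ^ 4 = (‖deriv F z‖ ^ 2) ^ 2 by ring]
  rw [Complex.sq_norm, Complex.sq_norm, Complex.sq_norm]
  ring

/-- If `F(0) = 0`, `F'(0) ≠ 0`, `|F'(0)| ≠ 1` and `F''(0) ≠ 0`, then every punctured
neighbourhood of `0` contains points (where `F ≠ 0`) of positive and of negative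
Gaussian curvature. -/
theorem sign_gaussK_of_simple_zero
    (U : Set ℂ) (hU : IsOpen U) (h0U : (0 : ℂ) ∈ U)
    (F : ℂ → ℂ) (hF : DifferentiableOn ℂ F U)
    (hF0 : F 0 = 0) (hF'0 : deriv F 0 ≠ 0)
    (hF'abs : ‖deriv F 0‖ ≠ 1)
    (hF''0 : deriv (deriv F) 0 ≠ 0) :
    ∀ δ > (0 : ℝ), ∃ zp zm : ℂ,
      0 < ‖zp‖ ∧ ‖zp‖ < δ ∧
      0 < ‖zm‖ ∧ ‖zm‖ < δ ∧
      F zp ≠ 0 ∧ F zm ≠ 0 ∧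
      0 < gaussK F zp ∧ gaussK F zm < 0 := by
  intro δ hδ
  have hAO : AnalyticOnNhd ℂ F U := hF.analyticOnNhd hU
  have hA : AnalyticAt ℂ F 0 := hAO 0 h0U
  have hA1 : AnalyticAt ℂ (deriv F) 0 := hAO.deriv 0 h0U
  have hA2 : AnalyticAt ℂ (deriv (deriv F)) 0 := hAO.deriv.deriv 0 h0U
  set a := deriv F 0 with ha
  set b := deriv (deriv F) 0 with hb
  set G : ℂ → ℂ := fun z => 2 * F z * deriv (deriv F) z - (deriv F z) ^ 2 with hGdef
  -- derivatives at 0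
  have hd0 : HasDerivAt F a 0 := hA.differentiableAt.hasDerivAt
  have hd1 : HasDerivAt (deriv F) b 0 := hA1.differentiableAt.hasDerivAt
  have hd2 : HasDerivAt (deriv (deriv F)) (deriv (deriv (deriv F)) 0) 0 :=
    hA2.differentiableAt.hasDerivAt
  have hG0 : HasDerivAt G 0 0 := by
    have h := ((hd0.const_mul 2).mul hd2).sub (hd1.pow 2)
    refine h.congr_deriv ?_
    rw [hF0]
    push_cast
    ring
  -- the direction
  set v : ℂ := a * (starRingEnd ℂ) b with hv
  have hvne : v ≠ 0 := by
    apply mul_ne_zero hF'0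
    simpa using hF''0
  have hγ : HasDerivAt (fun t : ℝ => t • v) v 0 := by
    simpa using (hasDerivAt_id (0:ℝ)).smul_const v
  have hGc : HasDerivAt (fun t : ℝ => G (t • v)) 0 0 := by
    have := (hG0.hasFDerivAt.restrictScalars ℝ).comp_hasDerivAt_of_eq 0 hγ (by simp)
    exact this.congr_deriv (by simp)
  have hFc : HasDerivAt (fun t : ℝ => deriv F (t • v)) (v * b) 0 := by
    have := (hd1.hasFDerivAt.restrictScalars ℝ).comp_hasDerivAt_of_eq 0 hγ (by simp)
    exact this.congr_deriv (by simp [smul_eq_mul, mul_comm])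
  set ψ : ℝ → ℝ := fun t =>
    Complex.normSq (G (t • v)) - (Complex.normSq (deriv F (t • v))) ^ 2 with hψdef
  have hn1 : HasDerivAt (fun t : ℝ => Complex.normSq (G (t • v))) 0 0 := by
    simpa using hasDerivAt_normSq_comp hGc
  have hn2 := hasDerivAt_normSq_comp hFc
  set C : ℝ := 0 - 2 * (Complex.normSq (deriv F ((0:ℝ) • v))) ^ 1 *
    (2 * ((deriv F ((0:ℝ) • v)).re * (v * b).re + (deriv F ((0:ℝ) • v)).im * (v * b).im))
    with hCdef
  have hψ : HasDerivAt ψ C 0 := hn1.sub (hn2.pow 2)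
  have hCval : C = -(4 * Complex.normSq a ^ 2 * Complex.normSq b) := by
    rw [hCdef]
    simp only [zero_smul, ← ha]
    rw [hv]
    simp only [Complex.normSq_apply, Complex.mul_re, Complex.mul_im,
      Complex.conj_re, Complex.conj_im]
    ring
  have hCneg : C < 0 := by
    rw [hCval]
    have h1 : 0 < Complex.normSq a := Complex.normSq_pos.mpr hF'0
    have h2 : 0 < Complex.normSq b := Complex.normSq_pos.mpr hF''0
    have : 0 < 4 * Complex.normSq a ^ 2 * Complex.normSq b := by positivity
    linarith
  have hψ0 : ψ 0 = 0 := by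
    simp [hψdef, hGdef, zero_smul, hF0, ← ha, map_pow]
  -- slope argument
  have hslope := hasDerivAt_iff_tendsto_slope.mp hψ
  have hev1 : ∀ᶠ t in 𝓝[≠] (0:ℝ), slope ψ 0 t < C / 2 :=
    hslope.eventually_lt_const (by linarith)
  -- good neighbourhood conditions
  have hFne : ∀ᶠ z in 𝓝[≠] (0:ℂ), F z ≠ 0 := by
    rcases hA.eventually_eq_zero_or_eventually_ne_zero with h | h
    · exfalso
      apply hF'0
      have h' : F =ᶠ[𝓝 (0:ℂ)] (fun _ => (0:ℂ)) := h
      have hd : deriv F =ᶠ[𝓝 (0:ℂ)] deriv (fun _ => (0:ℂ)) := h'.deriv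
      have := hd.self_of_nhds
      simpa [← ha] using this
    · exact h
  have habs : ∀ᶠ z in 𝓝 (0:ℂ), ‖deriv F z‖ ≠ 1 :=
    (continuous_norm.continuousAt.comp hA1.continuousAt).eventually_ne hF'abs
  have hδball : ∀ᶠ z in 𝓝 (0:ℂ), ‖z‖ < δ := by
    filter_upwards [Metric.ball_mem_nhds (0:ℂ) hδ] with z hz
    simpa [Complex.dist_eq] using hz
  have hgood : ∀ᶠ z in 𝓝[≠] (0:ℂ),
      F z ≠ 0 ∧ ‖deriv F z‖ ≠ 1 ∧ ‖z‖ < δ := by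
    filter_upwards [hFne, habs.filter_mono nhdsWithin_le_nhds,
      hδball.filter_mono nhdsWithin_le_nhds] with z h1 h2 h3
    exact ⟨h1, h2, h3⟩
  have hmap : Tendsto (fun t : ℝ => t • v) (𝓝[≠] (0:ℝ)) (𝓝[≠] (0:ℂ)) := by
    rw [nhdsWithin, nhdsWithin]
    refine Filter.Tendsto.inf ?_ ?_
    · have : Tendsto (fun t : ℝ => t • v) (𝓝 0) (𝓝 ((0:ℝ) • v)) :=
        ((continuous_id.smul continuous_const).tendsto (0:ℝ))
      simpa using this
    · refine tendsto_principal_principal.mpr fun t ht => ?_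
      simp only [Set.mem_compl_iff, Set.mem_singleton_iff] at *
      exact smul_ne_zero ht hvne
  have hall := (hmap.eventually hgood).and hev1
  -- the value of ψ in terms of slope
  have key : ∀ t : ℝ, t ≠ 0 → ψ t = slope ψ 0 t * t := by
    intro t ht
    rw [slope_def_field, hψ0]
    field_simp
    ring
  -- denominator positivity and sign of gaussK
  have hsign : ∀ z : ℂ, F z ≠ 0 → ‖deriv F z‖ ≠ 1 →
      (0 < (Complex.normSq (G z) - (Complex.normSq (deriv F z)) ^ 2) → 0 < gaussK F z) ∧
      ((Complex.normSq (G z) - (Complex.normSq (deriv F z)) ^ 2) < 0 → gaussK F z < 0) := by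
    intro z hz1 hz2
    have hD : 0 < 4 * Complex.normSq (F z) * (1 - Complex.normSq (deriv F z)) ^ 2 := by
      have h1 : 0 < Complex.normSq (F z) := Complex.normSq_pos.mpr hz1
      have h2 : (1 - Complex.normSq (deriv F z)) ≠ 0 := by
        intro h
        apply hz2
        have hsq : ‖deriv F z‖ ^ 2 = 1 := by
          rw [Complex.sq_norm]; linarith
        have hnn := norm_nonneg (deriv F z)
        nlinarith
      have h3 : 0 < (1 - Complex.normSq (deriv F z)) ^ 2 := pow_two_pos_of_ne_zero h2
      nlinarith
    constructor
    · intro hnum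
      rw [gaussK_eq]
      exact div_pos hnum hD
    · intro hnum
      rw [gaussK_eq]
      exact div_neg_of_neg_of_pos hnum hD
  -- pick positive and negative parameters
  obtain ⟨tp, hgp, hsp, htp⟩ : ∃ t : ℝ,
      (F (t • v) ≠ 0 ∧ ‖deriv F (t • v)‖ ≠ 1 ∧ ‖t • v‖ < δ) ∧
      slope ψ 0 t < C / 2 ∧ 0 < t := by
    have h2 : ∀ᶠ t in 𝓝[>] (0:ℝ), t ∈ Set.Ioi (0:ℝ) := eventually_mem_nhdsWithin
    have h1 := hall.filter_mono (nhdsWithin_mono (0:ℝ) (fun x (hx : x ∈ Set.Ioi 0) => ne_of_gt hx))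
    obtain ⟨t, ⟨hg, hs⟩, ht⟩ := (h1.and h2).exists
    exact ⟨t, hg, hs, ht⟩
  obtain ⟨tm, hgm, hsm, htm⟩ : ∃ t : ℝ,
      (F (t • v) ≠ 0 ∧ ‖deriv F (t • v)‖ ≠ 1 ∧ ‖t • v‖ < δ) ∧
      slope ψ 0 t < C / 2 ∧ t < 0 := by
    have h2 : ∀ᶠ t in 𝓝[<] (0:ℝ), t ∈ Set.Iio (0:ℝ) := eventually_mem_nhdsWithin
    have h1 := hall.filter_mono (nhdsWithin_mono (0:ℝ) (fun x (hx : x ∈ Set.Iio 0) => ne_of_lt hx))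
    obtain ⟨t, ⟨hg, hs⟩, ht⟩ := (h1.and h2).exists
    exact ⟨t, hg, hs, ht⟩
  refine ⟨tm • v, tp • v, ?_, hgm.2.2, ?_, hgp.2.2, hgm.1, hgp.1, ?_, ?_⟩
  · exact norm_pos_iff.mpr (smul_ne_zero (ne_of_lt htm) hvne)
  · exact norm_pos_iff.mpr (smul_ne_zero (ne_of_gt htp) hvne)
  · -- positive curvature at tm • v
    refine (hsign _ hgm.1 hgm.2.1).1 ?_
    have : ψ tm = slope ψ 0 tm * tm := key tm (ne_of_lt htm)
    have hpos : 0 < ψ tm := by nlinarith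
    simpa [hψdef, hGdef] using hpos
  · -- negative curvature at tp • v
    refine (hsign _ hgp.1 hgp.2.1).2 ?_
    have : ψ tp = slope ψ 0 tp * tp := key tp (ne_of_gt htp)
    have hneg : ψ tp < 0 := by nlinarith
    simpa [hψdef, hGdef] using hneg
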